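/- For every τ ∈ ℌ₂, the genus-2 thetanulls satisfy: θ_{00}(τ)⁴ − θ_{01}(τ)⁴ = θ_{10}(τ)⁴ + θ_{33}(τ)⁴, θ_{00}(τ)⁴ − θ_{02}(τ)⁴ = θ_{21}(τ)⁴ + θ_{30}(τ)⁴, and θ_{00}(τ)⁴ − θ_{03}(τ)⁴ = θ_{12}(τ)⁴ + θ_{20}(τ)⁴. -/

import Mathlib

/-!
Squaring the theta series and substituting `m + a′/2 = u + v`, `n + a′/2 = u - v` with
`u ∈ ℤ^g + σ/2`, `v ∈ ℤ^g + (σ + a′)/2` (one `σ ∈ {0,1}^g` per class of `m + n + a′` mod 2), the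
parallelogram law for `τ` gives the duplication formula
`θ_a(τ)² = ∑_σ (-1)^{σ·a″} θ_{(σ,0)}(2τ) θ_{(σ+a′,0)}(2τ)`.
In genus 2 it writes each of the ten squares `θ_a(τ)²` as a quadratic form in the four values
`θ_{(σ,0)}(2τ)`, and each quartic relation becomes a polynomial identity among these.
-/

open Complex BigOperators Finset

noncomputable section

/-- The Siegel upper half space of degree `g`: complex symmetric `g × g` matrices
whose imaginary part is positive definite. -/
def SiegelHalf (g : ℕ) : Set (Matrix (Fin g) (Fin g) ℂ) :=
  {τ | τ.IsSymm ∧ (Matrix.of fun i j => (τ i j).im).PosDef}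

/-- A theta characteristic `a = (a′, a″)` with `a′, a″ ∈ {0,1}^g`. -/
abbrev ThetaChar (g : ℕ) := (Fin g → Fin 2) × (Fin g → Fin 2)

/-- Componentwise sum of characteristics, modulo 2. -/
def charAdd {g : ℕ} (a b : ThetaChar g) : ThetaChar g := (a.1 + b.1, a.2 + b.2)

/-- `|a| = a′ᵀ a″`. -/
def charAbs {g : ℕ} (a : ThetaChar g) : ℕ := ∑ i, (a.1 i).val * (a.2 i).val

/-- A characteristic is even if `|a|` is even. -/
def IsEvenChar {g : ℕ} (a : ThetaChar g) : Prop := Even (charAbs a)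

instance {g : ℕ} : DecidablePred (IsEvenChar (g := g)) := fun a =>
  decidable_of_iff (charAbs a % 2 = 0) Nat.even_iff.symm

/-- `⟨a,b⟩ = a′ᵀ b″ − b′ᵀ a″`. -/
def charPair {g : ℕ} (a b : ThetaChar g) : ℤ :=
  (∑ i, ((a.1 i).val : ℤ) * ((b.2 i).val : ℤ))
    - ∑ i, ((b.1 i).val : ℤ) * ((a.2 i).val : ℤ)

/-- The vector `n + a′/2 ∈ ℂ^g`. -/
def thetaVec {g : ℕ} (a : ThetaChar g) (n : Fin g → ℤ) (i : Fin g) : ℂ :=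
  (n i : ℂ) + ((a.1 i).val : ℂ) / 2

/-- The `n`-th term of the theta series with characteristic `a`. -/
def thetaTerm {g : ℕ} (a : ThetaChar g) (z : Fin g → ℂ)
    (τ : Matrix (Fin g) (Fin g) ℂ) (n : Fin g → ℤ) : ℂ :=
  Complex.exp ((Real.pi : ℂ) * Complex.I *
      (∑ i, ∑ j, thetaVec a n i * τ i j * thetaVec a n j)
    + 2 * (Real.pi : ℂ) * Complex.I *
      (∑ i, thetaVec a n i * (z i + ((a.2 i).val : ℂ) / 2)))

/-- The theta function `θ_a(z, τ)`. -/
def Theta {g : ℕ} (a : ThetaChar g) (z : Fin g → ℂ)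
    (τ : Matrix (Fin g) (Fin g) ℂ) : ℂ :=
  ∑' n : Fin g → ℤ, thetaTerm a z τ n

/-- The thetanull `θ_a(τ) = θ_a(0, τ)`. -/
def Thetanull {g : ℕ} (a : ThetaChar g) (τ : Matrix (Fin g) (Fin g) ℂ) : ℂ :=
  Theta a 0 τ

/-- The derivation `δ_{jl}` acting on functions of `τ ∈ ℌ_g`. -/
def delta {g : ℕ} (j l : Fin g) (f : Matrix (Fin g) (Fin g) ℂ → ℂ)
    (τ : Matrix (Fin g) (Fin g) ℂ) : ℂ :=
  if j = l then
    (1 / ((Real.pi : ℂ) * Complex.I)) *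
      deriv (fun t : ℂ => f (τ + t • Matrix.single j j 1)) 0
  else
    (1 / (2 * (Real.pi : ℂ) * Complex.I)) *
      deriv (fun t : ℂ =>
        f (τ + t • (Matrix.single j l 1 + Matrix.single l j 1))) 0

/-- `ψ_{a,jl} = δ_{jl} θ_a / θ_a`. -/
def psi {g : ℕ} (a : ThetaChar g) (j l : Fin g)
    (τ : Matrix (Fin g) (Fin g) ℂ) : ℂ :=
  delta j l (Thetanull a) τ / Thetanull a τ

/-- The quadratic form `ψ_a(u) = ∑_{j,l} ψ_{a,jl} u_j u_l`. -/
def psiQuad {g : ℕ} (a : ThetaChar g) (u : Fin g → ℂ)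
    (τ : Matrix (Fin g) (Fin g) ℂ) : ℂ :=
  ∑ j, ∑ l, psi a j l τ * u j * u l

/-- `∂θ_a/∂z_j (0, τ)`. -/
def thetaZDeriv {g : ℕ} (a : ThetaChar g) (j : Fin g)
    (τ : Matrix (Fin g) (Fin g) ℂ) : ℂ :=
  deriv (fun t : ℂ => Theta a (fun i => if i = j then t else 0) τ) 0


/-- The digit encoding of genus-2 half-characteristics:
`0 ↦ (0,0)`, `1 ↦ (0,1)`, `2 ↦ (1,0)`, `3 ↦ (1,1)`. -/
def digitChar : Fin 4 → (Fin 2 → Fin 2)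
  | 0 => ![0, 0]
  | 1 => ![0, 1]
  | 2 => ![1, 0]
  | 3 => ![1, 1]

/-- The genus-2 characteristic denoted by the two digits `x y`. -/
def char2 (x y : Fin 4) : ThetaChar 2 := (digitChar x, digitChar y)

/-- The three derivations `δ₁ = δ_{11}`, `δ₂ = δ_{22}`, `δ₃ = δ_{12}` on `ℌ₂`. -/
def delta3 (j : Fin 3) (f : Matrix (Fin 2) (Fin 2) ℂ → ℂ)
    (τ : Matrix (Fin 2) (Fin 2) ℂ) : ℂ :=
  match j with
  | 0 => delta (0 : Fin 2) 0 f τ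
  | 1 => delta (1 : Fin 2) 1 f τ
  | 2 => delta (0 : Fin 2) 1 f τ

/-- `ψ_{a,j} = δ_j θ_a / θ_a` for `j = 1, 2, 3` in genus 2. -/
def psi3 (a : ThetaChar 2) (j : Fin 3) (τ : Matrix (Fin 2) (Fin 2) ℂ) : ℂ :=
  delta3 j (Thetanull a) τ / Thetanull a τ

/-- An enumeration of the ten even genus-2 characteristics
`𝔎₊ = {00,01,02,03,10,12,20,21,30,33}`. -/
def evenChar2 : Fin 10 → ThetaChar 2 :=
  ![char2 0 0, char2 0 1, char2 0 2, char2 0 3, char2 1 0,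
    char2 1 2, char2 2 0, char2 2 1, char2 3 0, char2 3 3]

open Matrix

theorem Matrix.PosDef.exists_pos_mul_sum_sq_le {ι : Type*} [Fintype ι] {A : Matrix ι ι ℝ}
    (hA : A.PosDef) : ∃ c > 0, ∀ x : ι → ℝ, c * ∑ i, x i ^ 2 ≤ x ⬝ᵥ A *ᵥ x := by
  rcases isEmpty_or_nonempty ι with hι | hι
  · exact ⟨1, one_pos, fun x => by simp⟩
  let f : EuclideanSpace ℝ ι → ℝ := fun y => y.ofLp ⬝ᵥ A *ᵥ y.ofLp
  have f_smul (r : ℝ) (y : EuclideanSpace ℝ ι) : f (r • y) = r ^ 2 * f y := by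
    simp only [f, WithLp.ofLp_smul, Matrix.mulVec_smul, dotProduct_smul, smul_dotProduct,
      smul_eq_mul]
    ring
  obtain ⟨y₀, hy₀_mem, hmin⟩ := (isCompact_sphere (0 : EuclideanSpace ℝ ι) 1).exists_isMinOn
    (NormedSpace.sphere_nonempty.mpr zero_le_one) (by fun_prop : Continuous f).continuousOn
  have hy₀ : y₀.ofLp ≠ 0 := by
    intro h
    simp [show y₀ = 0 from congrArg (WithLp.toLp 2) h] at hy₀_mem
  refine ⟨f y₀, hA.dotProduct_mulVec_pos hy₀, fun x => ?_⟩
  rcases eq_or_ne x 0 with rfl | hx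
  · simp
  set y := WithLp.toLp 2 x
  have hy : ‖y‖ ≠ 0 := by simpa [y] using hx
  have hnorm : ‖y‖ ^ 2 = ∑ i, x i ^ 2 := by simp [EuclideanSpace.norm_sq_eq, y]
  have hle : f y₀ ≤ f (‖y‖⁻¹ • y) := hmin (by simp [norm_smul, hy])
  rw [f_smul, inv_pow, ← div_eq_inv_mul, le_div_iff₀ (by positivity), hnorm] at hle
  exact hle

theorem summable_prod_apply_of_nonneg {α : Type*} :
    ∀ {g : ℕ} {f : Fin g → α → ℝ}, (∀ i k, 0 ≤ f i k) → (∀ i, Summable (f i)) →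
      Summable fun n : Fin g → α => ∏ i, f i (n i)
  | 0, _, _, _ => Summable.of_finite
  | _ + 1, f, hf0, hf => by
    have := (hf 0).mul_of_nonneg
      (summable_prod_apply_of_nonneg (fun i => hf0 i.succ) fun i => hf i.succ) (hf0 0)
      fun n => Finset.prod_nonneg fun i _ => hf0 i.succ (n i)
    refine (Fin.consEquiv fun _ => α).summable_iff.mp ?_
    simpa [Function.comp_def, Fin.prod_univ_succ] using this

theorem Fin.cast_val_add_of_two {R : Type*} [CommRing R] (x y : Fin 2) :
    ((x + y).val : R) = x.val + y.val - 2 * x.val * y.val := by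
  fin_cases x <;> fin_cases y <;> norm_num [Fin.val_add]

theorem Complex.exp_add_nat_mul_pi_I_add_int_mul_two_pi_I (B : ℂ) (S : ℕ) (P : ℤ) :
    Complex.exp (B + S * (Real.pi * I) + P * (2 * Real.pi * I)) = (-1) ^ S * Complex.exp B := by
  rw [Complex.exp_add, Complex.exp_add, Complex.exp_nat_mul, Complex.exp_pi_mul_I,
    Complex.exp_int_mul_two_pi_mul_I]
  ring

theorem sum_sum_mul_mul_parallelogram {ι R : Type*} [Fintype ι] [CommRing R]
    (τ : Matrix ι ι R) (u v : ι → R) :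
    ∑ i, ∑ j, (u i + v i) * τ i j * (u j + v j) + ∑ i, ∑ j, (u i - v i) * τ i j * (u j - v j)
      = ∑ i, ∑ j, u i * ((2 : R) • τ) i j * u j + ∑ i, ∑ j, v i * ((2 : R) • τ) i j * v j := by
  simp only [← Finset.sum_add_distrib, Matrix.smul_apply, smul_eq_mul]
  exact Finset.sum_congr rfl fun i _ => Finset.sum_congr rfl fun j _ => by ring

theorem Fintype.sum_fin_two_arrow_fin_two {M : Type*} [AddCommMonoid M]
    (f : (Fin 2 → Fin 2) → M) : ∑ σ, f σ = f ![0, 0] + f ![0, 1] + f ![1, 0] + f ![1, 1] := by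
  rw [← (finTwoArrowEquiv (Fin 2)).symm.sum_comp, Fintype.sum_prod_type]
  simp [Fin.sum_univ_two, add_assoc]

/-- `(σ, p, q) ↦ (m, n)` with `m + b/2 = u + v` and `n + b/2 = u - v`, where `u = p + σ/2` and
`v = q + (σ + b mod 2)/2`. -/
def dupEquivCoord (b : Fin 2) : Fin 2 × ℤ × ℤ ≃ ℤ × ℤ where
  toFun x := (x.2.1 + x.2.2 + x.1.val * (1 - b.val), x.2.1 - x.2.2 - (1 - x.1.val) * b.val)
  invFun y :=
    let s := (y.1 + y.2 + b.val) % 2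
    (if s = 0 then 0 else 1, (y.1 + y.2 + b.val - s) / 2,
      (y.1 - y.2 - s - b.val + 2 * s * b.val) / 2)
  left_inv := by
    rintro ⟨s, p, q⟩
    fin_cases s <;> fin_cases b <;> simp <;> omega
  right_inv := by
    rintro ⟨m, n⟩
    fin_cases b <;> simp <;> split_ifs <;> simp <;> omega

def dupEquiv {ι : Type*} (b : ι → Fin 2) :
    (ι → Fin 2) × (ι → ℤ) × (ι → ℤ) ≃ (ι → ℤ) × (ι → ℤ) :=
  ((Equiv.refl _).prodCongr (Equiv.arrowProdEquivProdArrow _ _ _).symm).trans <|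
    (Equiv.arrowProdEquivProdArrow _ _ _).symm.trans <|
      (Equiv.piCongrRight fun i => dupEquivCoord (b i)).trans (Equiv.arrowProdEquivProdArrow _ _ _)

theorem dupEquiv_apply {ι : Type*} (b : ι → Fin 2) (σ : ι → Fin 2) (p q : ι → ℤ) :
    dupEquiv b (σ, p, q) = (fun i => p i + q i + (σ i).val * (1 - (b i).val),
      fun i => p i - q i - (1 - (σ i).val) * (b i).val) := rfl

section ThetaNull

variable {g : ℕ}

def thetaVecRe (a : ThetaChar g) (n : Fin g → ℤ) (i : Fin g) : ℝ := n i + (a.1 i).val / 2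

theorem ofReal_thetaVecRe (a : ThetaChar g) (n : Fin g → ℤ) (i : Fin g) :
    (thetaVecRe a n i : ℂ) = thetaVec a n i := by
  simp [thetaVecRe, thetaVec]

theorem norm_thetaTerm_zero (a : ThetaChar g) (τ : Matrix (Fin g) (Fin g) ℂ) (n : Fin g → ℤ) :
    ‖thetaTerm a 0 τ n‖ = Real.exp (-(Real.pi *
      (thetaVecRe a n ⬝ᵥ (of fun i j => (τ i j).im) *ᵥ thetaVecRe a n))) := by
  rw [thetaTerm, Complex.norm_exp]
  simp [← ofReal_thetaVecRe, Complex.mul_re, Complex.mul_im, dotProduct, mulVec, Finset.mul_sum,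
    Complex.re_sum, mul_assoc]

theorem summable_norm_thetaTerm_zero (a : ThetaChar g) {τ : Matrix (Fin g) (Fin g) ℂ}
    (hτ : τ ∈ SiegelHalf g) : Summable fun n => ‖thetaTerm a 0 τ n‖ := by
  obtain ⟨c, hc, hcoer⟩ := hτ.2.exists_pos_mul_sum_sq_le
  have hgauss : Summable fun n : Fin g → ℤ =>
      ∏ i, HurwitzKernelBounds.f_int 0 ((a.1 i).val / 2) c (n i) :=
    summable_prod_apply_of_nonneg (fun _ _ => by unfold HurwitzKernelBounds.f_int; positivity)
      fun i => HurwitzKernelBounds.summable_f_int 0 _ hc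
  refine hgauss.of_nonneg_of_le (fun _ => norm_nonneg _) fun n => ?_
  rw [norm_thetaTerm_zero]
  simp only [HurwitzKernelBounds.f_int, pow_zero, one_mul, ← Real.exp_sum]
  have hsum : ∑ i, -Real.pi * ((n i : ℝ) + (a.1 i).val / 2) ^ 2 * c
      = -(Real.pi * (c * ∑ i, thetaVecRe a n i ^ 2)) := by
    simp only [thetaVecRe, Finset.mul_sum, ← Finset.sum_neg_distrib]
    exact Finset.sum_congr rfl fun i _ => by ring
  rw [Real.exp_le_exp, hsum, neg_le_neg_iff]
  exact mul_le_mul_of_nonneg_left (hcoer _) Real.pi_pos.le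

theorem ofReal_smul_mem_siegelHalf {τ : Matrix (Fin g) (Fin g) ℂ} (hτ : τ ∈ SiegelHalf g)
    {r : ℝ} (hr : 0 < r) : (r : ℂ) • τ ∈ SiegelHalf g := by
  refine ⟨hτ.1.smul _, ?_⟩
  have : (of fun i j => (((r : ℂ) • τ) i j).im) = r • of fun i j => (τ i j).im := by
    ext; simp
  rw [this]
  exact hτ.2.smul hr

theorem thetaTerm_mul_thetaTerm_dupEquiv (a : ThetaChar g) (τ : Matrix (Fin g) (Fin g) ℂ)
    (σ : Fin g → Fin 2) (pq : (Fin g → ℤ) × (Fin g → ℤ)) :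
    thetaTerm a 0 τ (dupEquiv a.1 (σ, pq)).1 * thetaTerm a 0 τ (dupEquiv a.1 (σ, pq)).2
      = (-1) ^ charAbs (σ, a.2) *
        (thetaTerm (σ, 0) 0 ((2 : ℂ) • τ) pq.1 * thetaTerm (σ + a.1, 0) 0 ((2 : ℂ) • τ) pq.2) := by
  obtain ⟨p, q⟩ := pq
  simp only [thetaTerm, ← Complex.exp_add, Pi.zero_apply, zero_add, Fin.val_zero, Nat.cast_zero,
    zero_div, mul_zero, Finset.sum_const_zero, add_zero]
  rw [← Complex.exp_add_nat_mul_pi_I_add_int_mul_two_pi_I _ _ (∑ i, p i * (a.2 i).val)]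
  set u := thetaVec (σ, 0) p
  set v := thetaVec (σ + a.1, 0) q
  have hm (i : Fin g) : thetaVec a (dupEquiv a.1 (σ, p, q)).1 i = u i + v i := by
    simp only [u, v, thetaVec, dupEquiv_apply, Pi.add_apply, Fin.cast_val_add_of_two]
    push_cast
    ring
  have hn (i : Fin g) : thetaVec a (dupEquiv a.1 (σ, p, q)).2 i = u i - v i := by
    simp only [u, v, thetaVec, dupEquiv_apply, Pi.add_apply, Fin.cast_val_add_of_two]
    push_cast
    ring
  have hlin : ∑ i, (u i + v i) * ((a.2 i).val / 2) + ∑ i, (u i - v i) * ((a.2 i).val / 2)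
      = (charAbs (σ, a.2) : ℂ) / 2 + ((∑ i, p i * (a.2 i).val : ℤ) : ℂ) := by
    simp only [u, charAbs, thetaVec]
    push_cast
    rw [Finset.sum_div, ← Finset.sum_add_distrib, ← Finset.sum_add_distrib]
    exact Finset.sum_congr rfl fun i _ => by ring
  simp only [hm, hn]
  congr 1
  linear_combination (Real.pi * I) * sum_sum_mul_mul_parallelogram τ u v
    + (2 * Real.pi * I) * hlin

theorem thetanull_sq_eq_sum (a : ThetaChar g) {τ : Matrix (Fin g) (Fin g) ℂ}
    (hτ : τ ∈ SiegelHalf g) :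
    Thetanull a τ ^ 2 = ∑ σ : Fin g → Fin 2, (-1) ^ charAbs (σ, a.2) *
      (Thetanull (σ, 0) ((2 : ℂ) • τ) * Thetanull (σ + a.1, 0) ((2 : ℂ) • τ)) := by
  have h2τ : (2 : ℂ) • τ ∈ SiegelHalf g := by
    convert ofReal_smul_mem_siegelHalf hτ two_pos using 2
    norm_num
  have hsum := summable_norm_thetaTerm_zero a hτ
  have hprod := (dupEquiv a.1).summable_iff.mpr (summable_mul_of_summable_norm hsum hsum)
  simp only [Function.comp_def] at hprod
  rw [Thetanull, Theta, sq, tsum_mul_tsum_of_summable_norm hsum hsum, ← (dupEquiv a.1).tsum_eq,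
    hprod.tsum_prod' hprod.prod_factor, tsum_fintype]
  refine Finset.sum_congr rfl fun σ _ => ?_
  simp only [thetaTerm_mul_thetaTerm_dupEquiv]
  rw [tsum_mul_left, Thetanull, Thetanull, Theta, Theta,
    tsum_mul_tsum_of_summable_norm (summable_norm_thetaTerm_zero _ h2τ)
      (summable_norm_thetaTerm_zero _ h2τ)]

end ThetaNull

/-- the three quartic Riemann relations among the genus-2
thetanulls. -/
theorem genus2_riemann_relations_fourth (τ : Matrix (Fin 2) (Fin 2) ℂ)
    (hτ : τ ∈ SiegelHalf 2) :
    Thetanull (char2 0 0) τ ^ 4 - Thetanull (char2 0 1) τ ^ 4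
      = Thetanull (char2 1 0) τ ^ 4 + Thetanull (char2 3 3) τ ^ 4 ∧
    Thetanull (char2 0 0) τ ^ 4 - Thetanull (char2 0 2) τ ^ 4
      = Thetanull (char2 2 1) τ ^ 4 + Thetanull (char2 3 0) τ ^ 4 ∧
    Thetanull (char2 0 0) τ ^ 4 - Thetanull (char2 0 3) τ ^ 4
      = Thetanull (char2 1 2) τ ^ 4 + Thetanull (char2 2 0) τ ^ 4 := by
  simp only [show ∀ z : ℂ, z ^ 4 = (z ^ 2) ^ 2 from fun z => by ring,
    fun a => thetanull_sq_eq_sum a hτ, Fintype.sum_fin_two_arrow_fin_two, char2, digitChar,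
    charAbs, Fin.sum_univ_two, Matrix.cons_val_zero, Matrix.cons_val_one, Matrix.cons_add_cons,
    Matrix.empty_add_empty, show (1 + 1 : Fin 2) = 0 from rfl, add_zero, zero_add, Fin.val_zero,
    Fin.val_one]
  refine ⟨by ring, by ring, by ring⟩
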